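/- arXiv:1306.2439 — 3 statements merged into one kernel-verified Lean document; each statement's English description precedes it below -/
import Mathlib

section
/- For any s ≥ 1, k ≥ 1 and any abscissae c_1, …, c_k ∈ ℝ, the k×s matrix ℐ_s with entries (ℐ_s)_{ij} = ∫₀^{c_i} P̂_{j−1}(x) dx satisfies ℐ_s = 𝒫_{s+1} X̂_s, where 𝒫_{s+1} ∈ ℝ^{k×(s+1)} has entries (𝒫_{s+1})_{ij} = P̂_{j−1}(c_i). -/
noncomputable section
open Polynomial intervalIntegral

/-- `ξ_j = 1/(2√(4j²−1))`. -/
def xi (j : ℕ) : ℝ := 1 / (2 * Real.sqrt (4 * (j : ℝ) ^ 2 - 1))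

/-- `P : ℕ → ℝ[X]` is the family of shifted Legendre polynomials, orthonormal on `[0,1]`,
with `deg P j = j` and positive leading coefficient. -/
def IsShiftedLegendre (P : ℕ → Polynomial ℝ) : Prop :=
  (∀ j, (P j).degree = (j : ℕ)) ∧
  (∀ j, 0 < (P j).leadingCoeff) ∧
  (∀ i j, (∫ x in (0:ℝ)..1, (P i).eval x * (P j).eval x) = if i = j then 1 else 0)

/-- Rodrigues weight. -/
def Wp (n : ℕ) : ℝ[X] := (X ^ 2 - X) ^ n

/-- (Unnormalized-lead) shifted Legendre polynomial on `[0,1]`. -/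
def Lp (n : ℕ) : ℝ[X] := Polynomial.C ((n.factorial : ℝ)⁻¹) * derivative^[n] (Wp n)

lemma Wp_eq (n : ℕ) : Wp n = X ^ n * (X - 1) ^ n := by
  rw [Wp, ← mul_pow]; ring_nf

lemma monic_Wp (n : ℕ) : (Wp n).Monic := by
  have h : (X ^ 2 - X : ℝ[X]).Monic := by
    apply monic_X_pow_sub (p := (X : ℝ[X])) (n := 2)
    simpa using degree_X_lt_degree_X_pow (R := ℝ) (by norm_num : 1 < 2)
  exact h.pow n

lemma natDegree_Wp (n : ℕ) : (Wp n).natDegree = 2 * n := by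
  have h : (X ^ 2 - X : ℝ[X]).natDegree = 2 := by
    compute_degree!
  have h2 : (X ^ 2 - X : ℝ[X]).Monic := by
    apply monic_X_pow_sub (p := (X : ℝ[X])) (n := 2)
    simpa using degree_X_lt_degree_X_pow (R := ℝ) (by norm_num : 1 < 2)
  rw [Wp, h2.natDegree_pow, h, Nat.mul_comm]

lemma coeff_Wp (n : ℕ) : (Wp n).coeff (2 * n) = 1 := by
  have := (monic_Wp n).coeff_natDegree
  rwa [natDegree_Wp] at this

lemma X_pow_dvd_Wp (n : ℕ) : (X : ℝ[X]) ^ n ∣ Wp n := ⟨(X - 1) ^ n, Wp_eq n⟩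

lemma X_sub_one_pow_dvd_Wp (n : ℕ) : ((X : ℝ[X]) - 1) ^ n ∣ Wp n :=
  ⟨X ^ n, by rw [Wp_eq n]; ring⟩

lemma eval_zero_iterate_deriv_Wp {n k : ℕ} (hk : k < n) :
    (derivative^[k] (Wp n)).eval 0 = 0 := by
  obtain ⟨q, hq⟩ := pow_sub_dvd_iterate_derivative_of_pow_dvd k (X_pow_dvd_Wp n)
  rw [hq]
  have : n - k ≠ 0 := Nat.sub_ne_zero_of_lt hk
  simp [this]

lemma eval_one_iterate_deriv_Wp {n k : ℕ} (hk : k < n) :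
    (derivative^[k] (Wp n)).eval 1 = 0 := by
  obtain ⟨q, hq⟩ := pow_sub_dvd_iterate_derivative_of_pow_dvd k (X_sub_one_pow_dvd_Wp n)
  rw [hq]
  have : n - k ≠ 0 := Nat.sub_ne_zero_of_lt hk
  simp [this]

lemma poly_intervalIntegrable (p : ℝ[X]) (a b : ℝ) :
    IntervalIntegrable (fun x => p.eval x) MeasureTheory.volume a b :=
  p.continuous_aeval.intervalIntegrable a b

/-- Integration by parts for polynomials. -/
lemma poly_ibp (p q : ℝ[X]) (a b : ℝ) :
    (∫ x in a..b, p.eval x * (derivative q).eval x) =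
      p.eval b * q.eval b - p.eval a * q.eval a -
        ∫ x in a..b, (derivative p).eval x * q.eval x := by
  apply integral_mul_deriv_eq_deriv_mul
  · exact fun x _ => p.hasDerivAt x
  · exact fun x _ => q.hasDerivAt x
  · exact poly_intervalIntegrable _ _ _
  · exact poly_intervalIntegrable _ _ _

/-- Iterated integration by parts for the Rodrigues weight. -/
lemma iterated_ibp (n : ℕ) : ∀ k, k ≤ n → ∀ q : ℝ[X],
    (∫ x in (0:ℝ)..1, (derivative^[k] (Wp n)).eval x * q.eval x) =
      (-1 : ℝ) ^ k * ∫ x in (0:ℝ)..1, (Wp n).eval x * (derivative^[k] q).eval x := by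
  intro k
  induction k with
  | zero => intro _ q; simp
  | succ k ih =>
    intro hk q
    have hkn : k < n := hk
    have h1 : (∫ x in (0:ℝ)..1, q.eval x * (derivative (derivative^[k] (Wp n))).eval x) =
        q.eval 1 * (derivative^[k] (Wp n)).eval 1 - q.eval 0 * (derivative^[k] (Wp n)).eval 0 -
          ∫ x in (0:ℝ)..1, (derivative q).eval x * (derivative^[k] (Wp n)).eval x :=
      poly_ibp q (derivative^[k] (Wp n)) 0 1
    rw [eval_zero_iterate_deriv_Wp hkn, eval_one_iterate_deriv_Wp hkn] at h1
    have h2 : (∫ x in (0:ℝ)..1, (derivative^[k+1] (Wp n)).eval x * q.eval x) =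
        - ∫ x in (0:ℝ)..1, (derivative^[k] (Wp n)).eval x * (derivative q).eval x := by
      rw [Function.iterate_succ_apply']
      calc (∫ x in (0:ℝ)..1, (derivative (derivative^[k] (Wp n))).eval x * q.eval x)
          = ∫ x in (0:ℝ)..1, q.eval x * (derivative (derivative^[k] (Wp n))).eval x := by
            simp_rw [mul_comm]
        _ = - ∫ x in (0:ℝ)..1, (derivative q).eval x * (derivative^[k] (Wp n)).eval x := by
            rw [h1]; ring
        _ = - ∫ x in (0:ℝ)..1, (derivative^[k] (Wp n)).eval x * (derivative q).eval x := by
            simp_rw [mul_comm]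
    rw [h2, ih (le_of_lt hkn) (derivative q), Function.iterate_succ_apply]
    ring

/-- Orthogonality of `Lp n` to low-degree polynomials. -/
lemma Lp_orth {n : ℕ} {q : ℝ[X]} (hq : q.natDegree < n) :
    (∫ x in (0:ℝ)..1, (Lp n).eval x * q.eval x) = 0 := by
  have hd : derivative^[n] q = 0 := iterate_derivative_eq_zero hq
  have := iterated_ibp n n le_rfl q
  rw [hd] at this
  simp only [eval_zero, mul_zero, intervalIntegral.integral_zero, mul_zero] at this
  simp only [Lp, eval_mul, eval_C]
  rw [show (fun x => (n.factorial : ℝ)⁻¹ * (derivative^[n] (Wp n)).eval x * q.eval x)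
    = fun x => (n.factorial : ℝ)⁻¹ * ((derivative^[n] (Wp n)).eval x * q.eval x) by
      funext x; ring] at *
  rw [intervalIntegral.integral_const_mul, this, mul_zero]

lemma coeff_Lp (n : ℕ) : (Lp n).coeff n = ((2 * n).choose n : ℝ) := by
  rw [Lp, coeff_C_mul, coeff_iterate_derivative]
  rw [show n + n = 2 * n by ring, coeff_Wp, Nat.descFactorial_eq_factorial_mul_choose]
  have hf : (n.factorial : ℝ) ≠ 0 := by positivity
  push_cast
  field_simp
  simp [nsmul_eq_mul]

lemma natDegree_Lp (n : ℕ) : (Lp n).natDegree = n := by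
  refine le_antisymm ?_ (le_natDegree_of_ne_zero ?_)
  · calc (Lp n).natDegree ≤ (derivative^[n] (Wp n)).natDegree := natDegree_C_mul_le _ _
      _ ≤ (Wp n).natDegree - n := natDegree_iterate_derivative _ _
      _ = n := by rw [natDegree_Wp]; omega
  · rw [coeff_Lp]
    have : 0 < (2 * n).choose n := Nat.choose_pos (by omega)
    positivity

lemma Lp_ne_zero (n : ℕ) : Lp n ≠ 0 := by
  intro h
  have h1 := coeff_Lp n
  rw [h] at h1
  simp only [coeff_zero] at h1
  have h2 : 0 < (2 * n).choose n := Nat.choose_pos (by omega)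
  have : (0:ℝ) < ((2 * n).choose n : ℝ) := by exact_mod_cast h2
  linarith

lemma degree_Lp (n : ℕ) : (Lp n).degree = n := by
  rw [degree_eq_natDegree (Lp_ne_zero n), natDegree_Lp]

lemma leadingCoeff_Lp (n : ℕ) : (Lp n).leadingCoeff = ((2 * n).choose n : ℝ) := by
  rw [leadingCoeff, natDegree_Lp, coeff_Lp]

lemma eval_one_Lp (n : ℕ) : (Lp n).eval 1 = 1 := by
  have key : (derivative^[n] (Wp n)).eval 1 = (n.factorial : ℝ) := by
    rw [Wp_eq, iterate_derivative_mul, eval_finset_sum]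
    rw [Finset.sum_eq_single n]
    · simp only [Nat.choose_self, one_smul, Nat.sub_self, Function.iterate_zero, id_eq,
        smul_eq_mul]
      have h1 : derivative^[n] ((X - 1 : ℝ[X]) ^ n) = (n.descFactorial n : ℝ[X]) • 1 := by
        have := iterate_derivative_X_add_pow n n (-1 : ℝ)
        simp only [map_neg, map_one, Nat.sub_self, pow_zero] at this
        rw [show ((X : ℝ[X]) + -1) = X - 1 by ring] at this
        simpa using this
      simp [h1, Nat.descFactorial_self]
    · intro k hk hkn
      have hklt : k < n := lt_of_le_of_ne (Nat.lt_succ_iff.mp (Finset.mem_range.mp hk)) hkn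
      have : ((X : ℝ[X]) - 1) ^ (n - k) ∣ derivative^[k] ((X - 1) ^ n) :=
        pow_sub_dvd_iterate_derivative_pow _ _ _
      obtain ⟨r, hr⟩ := this
      have h0 : n - k ≠ 0 := Nat.sub_ne_zero_of_lt hklt
      simp [hr, eval_pow, h0, zero_pow h0]
    · intro h; simp at h
  rw [Lp, eval_mul, eval_C, key]
  field_simp

lemma eval_zero_Lp (n : ℕ) : (Lp n).eval 0 = (-1 : ℝ) ^ n := by
  have key : (derivative^[n] (Wp n)).eval 0 = (n.factorial : ℝ) * (-1) ^ n := by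
    rw [Wp_eq, iterate_derivative_mul, eval_finset_sum]
    rw [Finset.sum_eq_single 0]
    · have h1 : derivative^[n] ((X : ℝ[X]) ^ n) = (n.descFactorial n : ℝ) • X ^ (n - n) :=
        iterate_derivative_X_pow_eq_smul (R := ℝ) n n
      simp [h1, Nat.descFactorial_self, mul_comm]
    · intro k hk hkn
      have hkpos : 0 < k := Nat.pos_of_ne_zero hkn
      have h0 : n - (n - k) ≠ 0 := by
        have hkle : k ≤ n := Nat.lt_succ_iff.mp (Finset.mem_range.mp hk)
        omega
      have h1 : derivative^[n - k] ((X : ℝ[X]) ^ n)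
          = (n.descFactorial (n - k) : ℝ) • X ^ (n - (n - k)) :=
        iterate_derivative_X_pow_eq_smul (R := ℝ) n (n - k)
      simp [h1, zero_pow h0]
    · intro h; simp at h
  rw [Lp, eval_mul, eval_C, key]
  have hf : (n.factorial : ℝ) ≠ 0 := by positivity
  field_simp

lemma beta_integral : ∀ b a : ℕ, (∫ x in (0:ℝ)..1, x ^ a * (1 - x) ^ b) =
    (a.factorial : ℝ) * b.factorial / (a + b + 1).factorial := by
  intro b
  induction b with
  | zero =>
    intro a
    simp only [pow_zero, mul_one, integral_pow, one_pow, Nat.factorial_zero]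
    norm_num
    rw [show a + 0 + 1 = a + 1 from rfl, Nat.factorial_succ]
    have hne : (a.factorial : ℝ) ≠ 0 := by positivity
    push_cast
    rw [eq_div_iff (by positivity)]
    field_simp
  | succ b ih =>
    intro a
    have hu : ∀ x ∈ Set.uIcc (0:ℝ) 1, HasDerivAt (fun y : ℝ => y ^ (a+1))
        ((a+1 : ℝ) * x ^ a) x := by
      intro x _
      simpa using hasDerivAt_pow (a+1) x
    have hv : ∀ x ∈ Set.uIcc (0:ℝ) 1, HasDerivAt (fun y : ℝ => (1 - y) ^ (b+1))
        (-((b+1 : ℝ) * (1 - x) ^ b)) x := by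
      intro x _
      have h1 : HasDerivAt (fun y : ℝ => 1 - y) (-1) x := by
        simpa using (hasDerivAt_id x).const_sub 1
      have h2 := (hasDerivAt_pow (b+1) (1 - x)).comp x h1
      simpa [mul_comm, Function.comp_def] using h2
    have hparts := intervalIntegral.integral_mul_deriv_eq_deriv_mul hu hv
      (by apply Continuous.intervalIntegrable; continuity)
      (by apply Continuous.intervalIntegrable; continuity)
    simp only [one_pow, zero_pow, ne_eq, Nat.succ_ne_zero, not_false_iff, sub_self,
      sub_zero, zero_pow] at hparts
    -- hparts : ∫ x^{a+1} * (-(b+1)(1-x)^b) = 1^{a+1}*0^{b+1} - 0^{a+1}*1^{b+1} - ∫ (a+1)x^a (1-x)^{b+1}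
    have h3 : (∫ x in (0:ℝ)..1, x ^ (a+1) * (-((b+1:ℝ) * (1 - x) ^ b)))
        = -((b+1:ℝ)) * ∫ x in (0:ℝ)..1, x ^ (a+1) * (1 - x) ^ b := by
      rw [← intervalIntegral.integral_const_mul]
      congr 1; funext x; ring
    have h4 : (∫ x in (0:ℝ)..1, (a+1:ℝ) * x ^ a * ((1 - x) ^ (b+1)))
        = (a+1:ℝ) * ∫ x in (0:ℝ)..1, x ^ a * (1 - x) ^ (b+1) := by
      rw [← intervalIntegral.integral_const_mul]
      congr 1; funext x; ring
    rw [h3, h4, ih (a+1)] at hparts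
    have ha1 : (a+1:ℝ) ≠ 0 := by positivity
    have key : (∫ x in (0:ℝ)..1, x ^ a * (1 - x) ^ (b+1))
        = ((b+1:ℝ) / (a+1)) * ((a+1).factorial * b.factorial / ((a+1) + b + 1).factorial) := by
      field_simp at hparts ⊢
      linarith [hparts]
    rw [key]
    have hfact : ((a+1).factorial : ℝ) = (a+1) * a.factorial := by
      push_cast [Nat.factorial_succ]; ring
    have hfact2 : ((b+1).factorial : ℝ) = (b+1) * b.factorial := by
      push_cast [Nat.factorial_succ]; ring
    have hix : (a + 1) + b + 1 = a + (b+1) + 1 := by omega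
    rw [hix, hfact, hfact2]
    have hf : ((a + (b+1) + 1).factorial : ℝ) ≠ 0 := by positivity
    field_simp

lemma integral_Wp (n : ℕ) : (∫ x in (0:ℝ)..1, (Wp n).eval x) =
    (-1 : ℝ) ^ n * ((n.factorial : ℝ) * n.factorial / (2 * n + 1).factorial) := by
  have h : ∀ x : ℝ, (Wp n).eval x = (-1 : ℝ) ^ n * (x ^ n * (1 - x) ^ n) := by
    intro x
    rw [Wp]
    simp only [eval_pow, eval_sub, eval_X]
    rw [← mul_pow, ← mul_pow]
    congr 1
    ring
  simp_rw [h]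
  rw [intervalIntegral.integral_const_mul, beta_integral n n,
    show n + n + 1 = 2 * n + 1 from by omega]

lemma iterate_derivative_Lp_self (n : ℕ) :
    derivative^[n] (Lp n) = Polynomial.C ((n.factorial : ℝ) * ((2 * n).choose n : ℝ)) := by
  have hdeg : (derivative^[n] (Lp n)).natDegree = 0 := by
    have := natDegree_iterate_derivative (Lp n) n
    rw [natDegree_Lp] at this
    omega
  have := Polynomial.eq_C_of_natDegree_le_zero (le_of_eq hdeg)
  rw [this, coeff_iterate_derivative]
  rw [show 0 + n = n from by omega, coeff_Lp]
  congr 1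
  rw [Nat.descFactorial_self]
  push_cast
  ring

lemma norm_Lp (n : ℕ) : (∫ x in (0:ℝ)..1, (Lp n).eval x * (Lp n).eval x) =
    1 / (2 * (n:ℝ) + 1) := by
  have h1 : (∫ x in (0:ℝ)..1, (derivative^[n] (Wp n)).eval x * (Lp n).eval x)
      = (-1 : ℝ) ^ n * ∫ x in (0:ℝ)..1, (Wp n).eval x * (derivative^[n] (Lp n)).eval x :=
    iterated_ibp n n le_rfl (Lp n)
  rw [iterate_derivative_Lp_self] at h1
  simp only [eval_C] at h1
  have h2 : (∫ x in (0:ℝ)..1, (Wp n).eval x * ((n.factorial : ℝ) * ((2 * n).choose n : ℝ)))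
      = ((n.factorial : ℝ) * ((2 * n).choose n : ℝ)) * ∫ x in (0:ℝ)..1, (Wp n).eval x := by
    rw [← intervalIntegral.integral_const_mul]
    congr 1; funext x; ring
  rw [h2, integral_Wp] at h1
  have h3 : (∫ x in (0:ℝ)..1, (Lp n).eval x * (Lp n).eval x)
      = (n.factorial : ℝ)⁻¹ * ∫ x in (0:ℝ)..1, (derivative^[n] (Wp n)).eval x * (Lp n).eval x := by
    rw [← intervalIntegral.integral_const_mul]
    congr 1; funext x
    rw [show (Lp n).eval x = (n.factorial : ℝ)⁻¹ * (derivative^[n] (Wp n)).eval x from by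
      rw [Lp]; simp]
    ring
  rw [h3, h1]
  have hch : ((2 * n).choose n : ℝ) * (n.factorial : ℝ) * (n.factorial : ℝ)
      = ((2 * n).factorial : ℝ) := by
    have := Nat.choose_mul_factorial_mul_factorial (show n ≤ 2 * n by omega)
    rw [show 2 * n - n = n from by omega] at this
    exact_mod_cast this
  have hfact : ((2 * n + 1).factorial : ℝ) = (2 * (n:ℝ) + 1) * ((2 * n).factorial : ℝ) := by
    rw [Nat.factorial_succ]
    push_cast
    ring
  have hne1 : (n.factorial : ℝ) ≠ 0 := by positivity
  have hne2 : ((2 * n).factorial : ℝ) ≠ 0 := by positivity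
  have hne3 : (2 * (n:ℝ) + 1) ≠ 0 := by positivity
  have hsign : ((-1:ℝ)^n) * ((-1:ℝ)^n) = 1 := by
    rw [← pow_add]
    exact Even.neg_one_pow ⟨n, by ring⟩
  have step1 : (n.factorial:ℝ)⁻¹ * ((-1:ℝ)^n * ((n.factorial:ℝ) * (((2*n).choose n : ℕ):ℝ) *
      ((-1:ℝ)^n * ((n.factorial:ℝ) * (n.factorial:ℝ) / (((2*n+1).factorial : ℕ):ℝ)))))
      = ((-1:ℝ)^n * (-1:ℝ)^n) * (((n.factorial:ℝ)⁻¹ * (n.factorial:ℝ)) *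
        ((((2*n).choose n : ℕ):ℝ) * (n.factorial:ℝ) * (n.factorial:ℝ) / (((2*n+1).factorial : ℕ):ℝ))) := by
    ring
  rw [step1, hsign, inv_mul_cancel₀ hne1, one_mul, one_mul, hch, hfact]
  rw [div_eq_div_iff (by positivity) (by positivity)]
  ring

open MeasureTheory in
lemma poly_eq_zero_of_integral_sq {d : ℝ[X]}
    (h : (∫ x in (0:ℝ)..1, d.eval x * d.eval x) = 0) : d = 0 := by
  by_contra hd
  have hf : (fun x : ℝ => d.eval x * d.eval x) =ᵐ[volume.restrict (Set.Ioc (0:ℝ) 1)] 0 := by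
    rw [← intervalIntegral.integral_eq_zero_iff_of_le_of_nonneg_ae zero_le_one ?_ ?_]
    · exact h
    · filter_upwards with x using mul_self_nonneg _
    · have : (fun x : ℝ => d.eval x * d.eval x) = fun x => (d * d).eval x := by
        funext x; simp
      rw [this]; exact poly_intervalIntegrable _ _ _
  have hroot : ∀ᵐ x ∂(volume.restrict (Set.Ioc (0:ℝ) 1)), d.IsRoot x := by
    filter_upwards [hf] with x hx
    have : d.eval x * d.eval x = 0 := hx
    exact mul_self_eq_zero.mp this
  have hfin : {x : ℝ | d.IsRoot x}.Finite := Polynomial.finite_setOf_isRoot hd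
  have h0 : (volume.restrict (Set.Ioc (0:ℝ) 1)) {x : ℝ | d.IsRoot x}ᶜ = 0 := hroot
  have h1 : (volume.restrict (Set.Ioc (0:ℝ) 1)) {x : ℝ | d.IsRoot x} = 0 := by
    refine le_antisymm (le_trans (Measure.le_iff'.1 Measure.restrict_le_self _) ?_) (by simp)
    rw [hfin.measure_zero]
  have hle := measure_union_le (μ := volume.restrict (Set.Ioc (0:ℝ) 1))
    {x : ℝ | d.IsRoot x} {x : ℝ | d.IsRoot x}ᶜ
  rw [h0, h1, Set.union_compl_self, add_zero, Measure.restrict_apply_univ] at hle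
  rw [Real.volume_Ioc] at hle
  simp at hle

lemma intable (p r : ℝ[X]) : IntervalIntegrable (fun x => p.eval x * r.eval x)
    MeasureTheory.volume (0:ℝ) 1 := by
  have : (fun x : ℝ => p.eval x * r.eval x) = fun x => (p * r).eval x := by
    funext x; simp
  rw [this]; exact poly_intervalIntegrable _ _ _

lemma int_mul_sub (p r s : ℝ[X]) :
    (∫ x in (0:ℝ)..1, p.eval x * (r - s).eval x) =
      (∫ x in (0:ℝ)..1, p.eval x * r.eval x) - ∫ x in (0:ℝ)..1, p.eval x * s.eval x := by
  rw [← intervalIntegral.integral_sub (intable p r) (intable p s)]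
  congr 1; funext x; simp [eval_sub]; ring

lemma int_mul_Cmul (p : ℝ[X]) (a : ℝ) (t : ℝ[X]) :
    (∫ x in (0:ℝ)..1, p.eval x * (Polynomial.C a * t).eval x) =
      a * ∫ x in (0:ℝ)..1, p.eval x * t.eval x := by
  rw [← intervalIntegral.integral_const_mul]
  congr 1; funext x; simp [eval_mul]; ring

/-- Projection: a polynomial of degree ≤ n orthogonal to all lower degrees is a multiple
of `Lp n`. -/
lemma proj_eq_C_mul_Lp {n : ℕ} {q : ℝ[X]} (hdeg : q.natDegree ≤ n)
    (horth : ∀ r : ℝ[X], r.natDegree < n → (∫ x in (0:ℝ)..1, q.eval x * r.eval x) = 0) :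
    q = Polynomial.C (q.coeff n / ((2 * n).choose n : ℝ)) * Lp n := by
  set cc := q.coeff n / ((2 * n).choose n : ℝ) with hcc
  set d := q - Polynomial.C cc * Lp n with hd
  have hchoose : (((2 * n).choose n : ℕ) : ℝ) ≠ 0 := by
    have : 0 < (2 * n).choose n := Nat.choose_pos (by omega)
    positivity
  have hdcoeff : d.coeff n = 0 := by
    rw [hd, coeff_sub, coeff_C_mul, coeff_Lp, hcc]
    field_simp
    ring
  have hddeg : d.natDegree ≤ n := by
    apply le_trans (natDegree_sub_le _ _)
    simp only [max_le_iff]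
    exact ⟨hdeg, le_trans (natDegree_C_mul_le _ _) (le_of_eq (natDegree_Lp n))⟩
  rcases eq_or_ne d 0 with h0 | h0
  · rw [sub_eq_zero] at h0; exact h0
  have hlt : d.natDegree < n := by
    rcases lt_or_eq_of_le hddeg with h | h
    · exact h
    · exfalso
      have := Polynomial.leadingCoeff_ne_zero.mpr h0
      rw [leadingCoeff, h] at this
      exact this hdcoeff
  have hint : (∫ x in (0:ℝ)..1, d.eval x * d.eval x) = 0 := by
    have e1 : (∫ x in (0:ℝ)..1, d.eval x * d.eval x)
        = (∫ x in (0:ℝ)..1, q.eval x * d.eval x)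
          - ∫ x in (0:ℝ)..1, (Polynomial.C cc * Lp n).eval x * d.eval x := by
      rw [← intervalIntegral.integral_sub (intable q d) (intable _ d)]
      congr 1; funext x; rw [hd]; simp [eval_sub]; ring
    have e2 : (∫ x in (0:ℝ)..1, (Polynomial.C cc * Lp n).eval x * d.eval x)
        = cc * ∫ x in (0:ℝ)..1, (Lp n).eval x * d.eval x := by
      rw [← intervalIntegral.integral_const_mul]
      congr 1; funext x; simp [eval_mul]; ring
    rw [e1, e2, horth d hlt, Lp_orth hlt, mul_zero, sub_zero]
  exact absurd (poly_eq_zero_of_integral_sq hint) h0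

/-- If `p` is orthogonal to `Q 0, …, Q (n-1)` where `deg Q j = j`, then `p` is orthogonal to
every polynomial of degree `< n`. -/
lemma orth_span (p : ℝ[X]) (Q : ℕ → ℝ[X]) (hdeg : ∀ j, (Q j).degree = (j : ℕ))
    (n : ℕ) (h : ∀ m, m < n → (∫ x in (0:ℝ)..1, p.eval x * (Q m).eval x) = 0) :
    ∀ k, ∀ r : ℝ[X], r.natDegree ≤ k → k < n →
      (∫ x in (0:ℝ)..1, p.eval x * r.eval x) = 0 := by
  have hQne : ∀ j, Q j ≠ 0 := fun j hj => by simpa [hj] using hdeg j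
  have hQnat : ∀ j, (Q j).natDegree = j := fun j =>
    natDegree_eq_of_degree_eq_some (hdeg j)
  have hQlc : ∀ j, (Q j).leadingCoeff ≠ 0 := fun j => leadingCoeff_ne_zero.mpr (hQne j)
  intro k
  induction k with
  | zero =>
    intro r hr hn
    have hr0 : r = Polynomial.C (r.coeff 0) := eq_C_of_natDegree_le_zero hr
    have hQ0 : Q 0 = Polynomial.C ((Q 0).coeff 0) := eq_C_of_natDegree_le_zero (le_of_eq (hQnat 0))
    have hQ0c : (Q 0).coeff 0 ≠ 0 := by
      intro hc; apply hQne 0; rw [hQ0, hc, map_zero]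
    have : r = Polynomial.C (r.coeff 0 / (Q 0).coeff 0) * Q 0 := by
      rw [hQ0]
      rw [← map_mul]
      congr 1
      field_simp
      rw [coeff_C_zero, mul_div_cancel_right₀ _ hQ0c]
      exact hr0
    rw [this, int_mul_Cmul, h 0 hn, mul_zero]
  | succ k ih =>
    intro r hr hn
    set a := r.coeff (k+1) / (Q (k+1)).leadingCoeff with ha
    set r' := r - Polynomial.C a * Q (k+1) with hr'
    have hr'deg : r'.natDegree ≤ k := by
      rw [natDegree_le_iff_coeff_eq_zero]
      intro m hm
      rcases eq_or_lt_of_le (Nat.succ_le_of_lt hm) with h1 | h1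
      · rw [hr', coeff_sub, coeff_C_mul, ← h1]
        rw [show (Q (k+1)).coeff (k+1) = (Q (k+1)).leadingCoeff from by
          rw [leadingCoeff, hQnat]]
        rw [ha, div_mul_cancel₀ _ (hQlc (k+1)), sub_self]
      · rw [hr', coeff_sub, coeff_C_mul,
          coeff_eq_zero_of_natDegree_lt (lt_of_le_of_lt hr h1),
          coeff_eq_zero_of_natDegree_lt (by rw [hQnat]; exact h1)]
        ring
    have hsplit : (∫ x in (0:ℝ)..1, p.eval x * r.eval x)
        = (∫ x in (0:ℝ)..1, p.eval x * r'.eval x)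
          + a * ∫ x in (0:ℝ)..1, p.eval x * (Q (k+1)).eval x := by
      rw [← int_mul_Cmul p a (Q (k+1)), ← intervalIntegral.integral_add
        (intable p r') (intable p _)]
      congr 1; funext x; rw [hr']; simp [eval_sub]; ring
    rw [hsplit, ih r' hr'deg (lt_trans (Nat.lt_succ_self k) hn), h (k+1) hn, mul_zero,
      add_zero]

/-- The orthonormal shifted Legendre polynomials. -/
def Ep (n : ℕ) : ℝ[X] := Polynomial.C (Real.sqrt (2 * n + 1)) * Lp n

lemma sqrt_pos' (n : ℕ) : (0:ℝ) < Real.sqrt (2 * n + 1) :=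
  Real.sqrt_pos.mpr (by positivity)

lemma P_eq_Ep (P : ℕ → Polynomial ℝ) (hP : IsShiftedLegendre P) : ∀ n, P n = Ep n := by
  obtain ⟨hdeg, hlead, horth⟩ := hP
  intro n
  induction n using Nat.strong_induction_on with
  | _ n ih =>
    have hPnat : (P n).natDegree = n := natDegree_eq_of_degree_eq_some (hdeg n)
    have hPorth : ∀ r : ℝ[X], r.natDegree < n →
        (∫ x in (0:ℝ)..1, (P n).eval x * r.eval x) = 0 := by
      intro r hr
      rcases Nat.eq_zero_or_pos n with h0 | h0
      · omega
      apply orth_span (P n) P hdeg n ?_ r.natDegree r le_rfl hr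
      intro m hm
      have := horth n m
      rw [if_neg (by omega)] at this
      exact this
    have hProj := proj_eq_C_mul_Lp (le_of_eq hPnat) hPorth
    set γ := (P n).coeff n / ((2 * n).choose n : ℝ) with hγ
    have hchoose : (0:ℝ) < (((2 * n).choose n : ℕ) : ℝ) := by
      have : 0 < (2 * n).choose n := Nat.choose_pos (by omega)
      positivity
    have hγpos : 0 < γ := by
      have h1 := hlead n
      have h2 : (P n).leadingCoeff = (P n).coeff n := by rw [leadingCoeff, hPnat]
      rw [h2] at h1
      exact div_pos h1 hchoose
    have hnorm : γ * γ * (1 / (2 * (n:ℝ) + 1)) = 1 := by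
      have h1 := horth n n
      rw [if_pos rfl] at h1
      rw [hProj] at h1
      have h2 : (∫ x in (0:ℝ)..1, (Polynomial.C γ * Lp n).eval x * (Polynomial.C γ * Lp n).eval x)
          = γ * γ * ∫ x in (0:ℝ)..1, (Lp n).eval x * (Lp n).eval x := by
        rw [← intervalIntegral.integral_const_mul]
        congr 1; funext x; simp [eval_mul]; ring
      rw [h2, norm_Lp] at h1
      exact h1
    have hγsq : γ * γ = 2 * (n:ℝ) + 1 := by
      have hne : (2 * (n:ℝ) + 1) ≠ 0 := by positivity
      field_simp at hnorm
      linarith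
    have hγeq : γ = Real.sqrt (2 * (n:ℝ) + 1) := by
      rw [show (2 * (n:ℝ) + 1) = γ * γ from hγsq.symm, Real.sqrt_mul_self (le_of_lt hγpos)]
    rw [hProj, Ep, hγeq]


lemma int_sub_mul (r s p : ℝ[X]) :
    (∫ x in (0:ℝ)..1, (r - s).eval x * p.eval x) =
      (∫ x in (0:ℝ)..1, r.eval x * p.eval x) - ∫ x in (0:ℝ)..1, s.eval x * p.eval x := by
  rw [← intervalIntegral.integral_sub (intable r p) (intable s p)]
  congr 1; funext x; simp [eval_sub]; ring

lemma Lp_deriv (n : ℕ) :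
    derivative (Lp (n+2) - Lp n) = Polynomial.C (2 * (2 * (n:ℝ) + 3)) * Lp (n+1) := by
  set q := Lp (n+2) - Lp n with hq
  set dq := derivative q with hdq
  have hq0 : q.eval 0 = 0 := by
    rw [hq, eval_sub, eval_zero_Lp, eval_zero_Lp]
    ring
  have hq1 : q.eval 1 = 0 := by
    rw [hq, eval_sub, eval_one_Lp, eval_one_Lp, sub_self]
  have hdqdeg : dq.natDegree ≤ n + 1 := by
    have h1 : q.natDegree ≤ n + 2 := by
      apply le_trans (natDegree_sub_le _ _)
      simp only [max_le_iff, natDegree_Lp]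
      omega
    calc dq.natDegree ≤ q.natDegree - 1 := natDegree_derivative_le q
      _ ≤ n + 1 := by omega
  have hdqorth : ∀ r : ℝ[X], r.natDegree < n + 1 →
      (∫ x in (0:ℝ)..1, dq.eval x * r.eval x) = 0 := by
    intro r hr
    have hparts := poly_ibp r q 0 1
    rw [hq0, hq1, mul_zero, mul_zero, sub_zero, zero_sub] at hparts
    have hcomm : (∫ x in (0:ℝ)..1, dq.eval x * r.eval x)
        = ∫ x in (0:ℝ)..1, r.eval x * (derivative q).eval x := by
      rw [hdq]; congr 1; funext x; ring
    rw [hcomm, hparts]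
    have hqDr : (∫ x in (0:ℝ)..1, (derivative r).eval x * q.eval x) = 0 := by
      rcases Nat.eq_zero_or_pos r.natDegree with h0 | h0
      · rw [derivative_of_natDegree_zero h0]
        simp
      · have hDr : (derivative r).natDegree < n := by
          have := natDegree_derivative_le r
          omega
        have e1 : (∫ x in (0:ℝ)..1, (derivative r).eval x * q.eval x)
            = ∫ x in (0:ℝ)..1, q.eval x * (derivative r).eval x := by
          congr 1; funext x; ring
        rw [e1, hq, int_sub_mul]
        rw [Lp_orth (lt_trans hDr (by omega)), Lp_orth hDr, sub_self]
    rw [hqDr, neg_zero]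
  have hproj := proj_eq_C_mul_Lp hdqdeg hdqorth
  have hcoeff : dq.coeff (n+1) = ((2*(n+2)).choose (n+2) : ℝ) * ((n:ℝ) + 2) := by
    rw [hdq, coeff_derivative, hq, coeff_sub,
      coeff_eq_zero_of_natDegree_lt (by rw [natDegree_Lp]; omega : (Lp n).natDegree < n + 2)]
    rw [show (Lp (n+2)).coeff (n+2) = ((2*(n+2)).choose (n+2) : ℝ) from coeff_Lp (n+2)]
    push_cast
    ring
  rw [hproj, hcoeff]
  congr 2
  -- ⊢ choose(2n+4, n+2) * (n+2) / choose(2n+2, n+1) = 2 * (2n+3)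
  have hA := Nat.choose_mul_factorial_mul_factorial (show n+2 ≤ 2*(n+2) by omega)
  have hB := Nat.choose_mul_factorial_mul_factorial (show n+1 ≤ 2*(n+1) by omega)
  rw [show 2*(n+2) - (n+2) = n+2 by omega] at hA
  rw [show 2*(n+1) - (n+1) = n+1 by omega] at hB
  have hA' : (((2*(n+2)).choose (n+2) : ℕ) : ℝ) * (((n+2).factorial : ℕ) : ℝ)
      * (((n+2).factorial : ℕ) : ℝ) = (((2*(n+2)).factorial : ℕ) : ℝ) := by exact_mod_cast hA
  have hB' : (((2*(n+1)).choose (n+1) : ℕ) : ℝ) * (((n+1).factorial : ℕ) : ℝ)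
      * (((n+1).factorial : ℕ) : ℝ) = (((2*(n+1)).factorial : ℕ) : ℝ) := by exact_mod_cast hB
  have hf1 : (((2*(n+2)).factorial : ℕ) : ℝ)
      = (2*(n:ℝ)+4) * ((2*(n:ℝ)+3) * (((2*(n+1)).factorial : ℕ) : ℝ)) := by
    rw [show 2*(n+2) = (2*(n+1)+1) + 1 by omega, Nat.factorial_succ, Nat.factorial_succ]
    push_cast
    ring
  have hf2 : (((n+2).factorial : ℕ) : ℝ) = ((n:ℝ)+2) * (((n+1).factorial : ℕ) : ℝ) := by
    rw [show n + 2 = (n+1)+1 by omega, Nat.factorial_succ]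
    push_cast
    ring
  have hBpos : (0:ℝ) < (((2*(n+1)).choose (n+1) : ℕ) : ℝ) := by
    have : 0 < (2*(n+1)).choose (n+1) := Nat.choose_pos (by omega)
    positivity
  have hfac1 : (0:ℝ) < (((n+1).factorial : ℕ) : ℝ) := by positivity
  rw [div_eq_iff (ne_of_gt hBpos)]
  have key : (((2*(n+2)).choose (n+2) : ℕ) : ℝ) * ((n:ℝ)+2) * (((n+1).factorial : ℕ) : ℝ)
      * (((n+1).factorial : ℕ) : ℝ) * (((n:ℝ)+2) * ((n:ℝ)+2))
      = 2 * (2*(n:ℝ)+3) * (((2*(n+1)).choose (n+1) : ℕ) : ℝ) * (((n+1).factorial : ℕ) : ℝ)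
      * (((n+1).factorial : ℕ) : ℝ) * (((n:ℝ)+2) * ((n:ℝ)+2)) := by
    have e1 : (((2*(n+2)).choose (n+2) : ℕ) : ℝ) * (((n+2).factorial : ℕ) : ℝ)
        * (((n+2).factorial : ℕ) : ℝ) = (2*(n:ℝ)+4) * ((2*(n:ℝ)+3)
        * ((((2*(n+1)).choose (n+1) : ℕ) : ℝ) * (((n+1).factorial : ℕ) : ℝ)
        * (((n+1).factorial : ℕ) : ℝ))) := by
      rw [hA', hf1, ← hB']
    rw [hf2] at e1
    nlinarith [e1]
  have hne : (((n+1).factorial : ℕ) : ℝ) * (((n+1).factorial : ℕ) : ℝ)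
      * (((n:ℝ)+2) * ((n:ℝ)+2)) ≠ 0 := by positivity
  apply mul_right_cancel₀ hne
  linear_combination key

lemma Lp_zero_eq : Lp 0 = 1 := by
  simp [Lp, Wp]

lemma Lp_one_eq : Lp 1 = Polynomial.C 2 * X - 1 := by
  rw [Lp, Wp]
  simp only [pow_one, Nat.factorial_one, Nat.cast_one, inv_one, map_one, one_mul,
    Function.iterate_one]
  rw [derivative_sub, derivative_X_pow, derivative_X]
  simp

lemma integral_Lp_succ (n : ℕ) (c : ℝ) :
    (∫ x in (0:ℝ)..c, (Lp (n+1)).eval x)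
      = (2 * (2 * (n:ℝ) + 3))⁻¹ * ((Lp (n+2)).eval c - (Lp n).eval c) := by
  set k := (2 * (2 * (n:ℝ) + 3))⁻¹ with hk
  have hkne : (2 * (2 * (n:ℝ) + 3)) ≠ 0 := by positivity
  have hF : ∀ x ∈ Set.uIcc (0:ℝ) c,
      HasDerivAt (fun y => k * ((Lp (n+2)).eval y - (Lp n).eval y)) ((Lp (n+1)).eval x) x := by
    intro x _
    have h1 := (Lp (n+2) - Lp n).hasDerivAt x
    rw [Lp_deriv n] at h1
    have h2 := h1.const_mul k
    have e1 : (fun y => k * (Lp (n+2) - Lp n).eval y)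
        = fun y => k * ((Lp (n+2)).eval y - (Lp n).eval y) := by
      funext y; rw [eval_sub]
    have e2 : k * (Polynomial.C (2 * (2 * (n:ℝ) + 3)) * Lp (n+1)).eval x
        = (Lp (n+1)).eval x := by
      rw [eval_mul, eval_C, hk]
      field_simp
    rw [e1, e2] at h2
    exact h2
  have hint := intervalIntegral.integral_eq_sub_of_hasDerivAt hF
    (poly_intervalIntegrable (Lp (n+1)) 0 c)
  rw [hint, eval_zero_Lp, eval_zero_Lp]
  have : (-1:ℝ) ^ (n+2) - (-1:ℝ) ^ n = 0 := by
    rw [pow_add]; ring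
  rw [this, mul_zero, sub_zero]

lemma xi_succ_sqrt (n : ℕ) :
    xi (n+2) * Real.sqrt (2 * (n:ℝ) + 5) = 1 / (2 * Real.sqrt (2 * (n:ℝ) + 3)) := by
  have ha : (0:ℝ) < 2 * (n:ℝ) + 3 := by positivity
  have hb : (0:ℝ) < 2 * (n:ℝ) + 5 := by positivity
  rw [xi, show 4 * (((n:ℕ)+2:ℕ):ℝ)^2 - 1 = (2 * (n:ℝ) + 3) * (2 * (n:ℝ) + 5) by
    push_cast; ring]
  rw [Real.sqrt_mul ha.le]
  have h1 : Real.sqrt (2 * (n:ℝ) + 3) ≠ 0 := ne_of_gt (Real.sqrt_pos.mpr ha)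
  have h2 : Real.sqrt (2 * (n:ℝ) + 5) ≠ 0 := ne_of_gt (Real.sqrt_pos.mpr hb)
  field_simp

lemma xi_pred_sqrt (n : ℕ) :
    xi (n+1) * Real.sqrt (2 * (n:ℝ) + 1) = 1 / (2 * Real.sqrt (2 * (n:ℝ) + 3)) := by
  have ha : (0:ℝ) < 2 * (n:ℝ) + 3 := by positivity
  have hd : (0:ℝ) < 2 * (n:ℝ) + 1 := by positivity
  rw [xi, show 4 * (((n:ℕ)+1:ℕ):ℝ)^2 - 1 = (2 * (n:ℝ) + 1) * (2 * (n:ℝ) + 3) by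
    push_cast; ring]
  rw [Real.sqrt_mul hd.le]
  have h1 : Real.sqrt (2 * (n:ℝ) + 3) ≠ 0 := ne_of_gt (Real.sqrt_pos.mpr ha)
  have h2 : Real.sqrt (2 * (n:ℝ) + 1) ≠ 0 := ne_of_gt (Real.sqrt_pos.mpr hd)
  field_simp

lemma sqrt_mid (n : ℕ) :
    Real.sqrt (2 * (n:ℝ) + 3) * (2 * (2 * (n:ℝ) + 3))⁻¹
      = 1 / (2 * Real.sqrt (2 * (n:ℝ) + 3)) := by
  have ha : (0:ℝ) < 2 * (n:ℝ) + 3 := by positivity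
  have h1 : Real.sqrt (2 * (n:ℝ) + 3) ≠ 0 := ne_of_gt (Real.sqrt_pos.mpr ha)
  have hs := Real.mul_self_sqrt ha.le
  field_simp
  linear_combination hs

lemma eval_Ep (m : ℕ) (x : ℝ) :
    (Ep m).eval x = Real.sqrt (2 * (m:ℝ) + 1) * (Lp m).eval x := by
  rw [Ep, eval_mul, eval_C]

lemma integral_Ep_succ (n : ℕ) (c : ℝ) :
    (∫ x in (0:ℝ)..c, (Ep (n+1)).eval x)
      = xi (n+2) * (Ep (n+2)).eval c - xi (n+1) * (Ep n).eval c := by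
  have e1 : (2 * ((((n:ℕ)+2):ℕ):ℝ) + 1) = 2 * (n:ℝ) + 5 := by push_cast; ring
  have e2 : (2 * ((((n:ℕ)+1):ℕ):ℝ) + 1) = 2 * (n:ℝ) + 3 := by push_cast; ring
  have hL : (∫ x in (0:ℝ)..c, (Ep (n+1)).eval x)
      = Real.sqrt (2 * (n:ℝ) + 3) * ∫ x in (0:ℝ)..c, (Lp (n+1)).eval x := by
    rw [← intervalIntegral.integral_const_mul]
    congr 1; funext x
    rw [eval_Ep, e2]
  rw [hL, integral_Lp_succ, eval_Ep, eval_Ep, e1]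
  linear_combination ((Lp (n+2)).eval c - (Lp n).eval c) * sqrt_mid n
    - ((Lp (n+2)).eval c) * xi_succ_sqrt n + ((Lp n).eval c) * xi_pred_sqrt n

lemma xi_one_sqrt : xi 1 * Real.sqrt 3 = 1 / 2 := by
  have h3 : (0:ℝ) < 3 := by norm_num
  have h1 : Real.sqrt 3 ≠ 0 := ne_of_gt (Real.sqrt_pos.mpr h3)
  rw [xi, show 4 * ((1:ℕ):ℝ)^2 - 1 = 3 by norm_num]
  field_simp

lemma eval_Ep_zero' (x : ℝ) : (Ep 0).eval x = 1 := by
  rw [eval_Ep, Lp_zero_eq, show (2 * ((0:ℕ):ℝ) + 1) = 1 by norm_num, Real.sqrt_one]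
  simp

lemma eval_Ep_one' (x : ℝ) : (Ep 1).eval x = Real.sqrt 3 * (2 * x - 1) := by
  rw [eval_Ep, Lp_one_eq, show (2 * ((1:ℕ):ℝ) + 1) = 3 by norm_num]
  simp [eval_sub, eval_mul]

lemma integral_Ep_zero (c : ℝ) :
    (∫ x in (0:ℝ)..c, (Ep 0).eval x)
      = (1/2) * (Ep 0).eval c + xi 1 * (Ep 1).eval c := by
  simp_rw [eval_Ep_zero', eval_Ep_one']
  rw [intervalIntegral.integral_const, smul_eq_mul, mul_one, sub_zero]
  have := xi_one_sqrt
  linear_combination (1 - 2 * c) * this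

/-- The tridiagonal matrix `X_s` (0-based indexing of the 1-based matrix in the paper):
`(X_s)_{11} = 1/2`, `(X_s)_{j+1,j} = ξ_j`, `(X_s)_{j,j+1} = −ξ_j`. -/
def Xmat (s : ℕ) : Matrix (Fin s) (Fin s) ℝ :=
  Matrix.of fun i j =>
    if (i : ℕ) = 0 ∧ (j : ℕ) = 0 then 1 / 2
    else if (i : ℕ) = (j : ℕ) + 1 then xi ((j : ℕ) + 1)
    else if (j : ℕ) = (i : ℕ) + 1 then -xi ((i : ℕ) + 1)
    else 0

/-- `X̂_s ∈ ℝ^{(s+1)×s}`: the matrix `X_s` with the extra row `(0,…,0,ξ_s)` appended. -/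
def Xhat (s : ℕ) : Matrix (Fin (s + 1)) (Fin s) ℝ :=
  Matrix.of fun i j =>
    if h : (i : ℕ) < s then Xmat s ⟨i, h⟩ j
    else if (j : ℕ) + 1 = s then xi s else 0

/-- The matrix `𝒫_r ∈ ℝ^{k×r}`, `(𝒫_r)_{ij} = P̂_{j−1}(c_i)` (0-based). -/
def Pmat {k : ℕ} (P : ℕ → Polynomial ℝ) (c : Fin k → ℝ) (r : ℕ) :
    Matrix (Fin k) (Fin r) ℝ :=
  Matrix.of fun i j => (P (j : ℕ)).eval (c i)

/-- The matrix `ℐ_s ∈ ℝ^{k×s}`, `(ℐ_s)_{ij} = ∫₀^{c_i} P̂_{j−1}(x) dx` (0-based). -/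
def Imat {k : ℕ} (P : ℕ → Polynomial ℝ) (c : Fin k → ℝ) (s : ℕ) :
    Matrix (Fin k) (Fin s) ℝ :=
  Matrix.of fun i j => ∫ x in (0:ℝ)..(c i), (P (j : ℕ)).eval x

lemma Xhat_apply_eq (s : ℕ) (l : Fin (s+1)) (j : Fin s) :
    Xhat s l j = (if (l:ℕ) = (j:ℕ)+1 then xi ((j:ℕ)+1) else 0)
      + (if (l:ℕ)+1 = (j:ℕ) then -xi (j:ℕ) else 0)
      + (if (l:ℕ) = 0 ∧ (j:ℕ) = 0 then 1/2 else 0) := by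
  have hj : (j:ℕ) < s := j.isLt
  rw [Xhat]
  simp only [Matrix.of_apply]
  by_cases h : (l:ℕ) < s
  · rw [dif_pos h, Xmat]
    simp only [Matrix.of_apply]
    by_cases hA : (l:ℕ) = 0 ∧ (j:ℕ) = 0
    · rw [if_pos hA, if_neg (by omega), if_neg (by omega), if_pos hA]; ring
    · rw [if_neg hA]
      by_cases hB : (l:ℕ) = (j:ℕ) + 1
      · rw [if_pos hB, if_pos hB, if_neg (by omega), if_neg hA]; ring
      · rw [if_neg hB, if_neg hB]
        by_cases hC : (j:ℕ) = (l:ℕ) + 1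
        · rw [if_pos hC, if_pos (by omega), if_neg hA, hC]; ring
        · rw [if_neg hC, if_neg (by omega), if_neg hA]; ring
  · rw [dif_neg h]
    have hl : (l:ℕ) = s := by omega
    have h2 : ¬ ((l:ℕ)+1 = (j:ℕ)) := by omega
    have h3 : ¬ ((l:ℕ) = 0 ∧ (j:ℕ) = 0) := by omega
    rw [if_neg h2, if_neg h3]
    by_cases h4 : (j:ℕ)+1 = s
    · rw [if_pos h4, if_pos (by omega), h4]
      ring
    · rw [if_neg h4, if_neg (by omega)]
      ring

/-- For any `s ≥ 1`, `k ≥ 1` and any abscissae `c_1, …, c_k ∈ ℝ`, one has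
`ℐ_s = 𝒫_{s+1} X̂_s`. -/
theorem Imat_eq_Pmat_mul_Xhat (P : ℕ → Polynomial ℝ) (hP : IsShiftedLegendre P)
    (s k : ℕ) (hs : 1 ≤ s) (hk : 1 ≤ k) (c : Fin k → ℝ) :
    Imat P c s = Pmat P c (s + 1) * Xhat s := by
  have hPE := P_eq_Ep P hP
  ext i j
  rw [Matrix.mul_apply, Imat, Pmat]
  simp only [Matrix.of_apply]
  have hj : (j:ℕ) < s := j.isLt
  simp only [Xhat_apply_eq, mul_add]
  rw [Finset.sum_add_distrib, Finset.sum_add_distrib]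
  have hsum1 : (∑ l : Fin (s+1), (P (l:ℕ)).eval (c i) *
      (if (l:ℕ) = (j:ℕ)+1 then xi ((j:ℕ)+1) else 0))
      = (P ((j:ℕ)+1)).eval (c i) * xi ((j:ℕ)+1) := by
    rw [Finset.sum_eq_single (⟨(j:ℕ)+1, by omega⟩ : Fin (s+1))]
    · simp
    · intro b _ hb
      rw [if_neg (fun hc => hb (Fin.ext (by simpa using hc))), mul_zero]
    · intro h; exact absurd (Finset.mem_univ _) h
  have hsum3 : (∑ l : Fin (s+1), (P (l:ℕ)).eval (c i) *
      (if (l:ℕ) = 0 ∧ (j:ℕ) = 0 then 1/2 else 0))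
      = if (j:ℕ) = 0 then (P 0).eval (c i) * (1/2) else 0 := by
    by_cases hj0 : (j:ℕ) = 0
    · rw [if_pos hj0, Finset.sum_eq_single (⟨0, by omega⟩ : Fin (s+1))]
      · simp [hj0]
      · intro b _ hb
        rw [if_neg, mul_zero]
        rintro ⟨hb0, -⟩
        exact hb (Fin.ext (by simpa using hb0))
      · intro h; exact absurd (Finset.mem_univ _) h
    · rw [if_neg hj0, Finset.sum_eq_zero]
      intro b _
      rw [if_neg (fun hc => hj0 hc.2), mul_zero]
  rw [hsum1, hsum3]
  rcases Nat.eq_zero_or_pos (j:ℕ) with hj0 | hj0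
  · have hsum2 : (∑ l : Fin (s+1), (P (l:ℕ)).eval (c i) *
        (if (l:ℕ)+1 = (j:ℕ) then -xi (j:ℕ) else 0)) = 0 := by
      apply Finset.sum_eq_zero
      intro b _
      rw [if_neg (by omega), mul_zero]
    rw [hsum2, if_pos hj0, hj0]
    simp only [hPE]
    rw [integral_Ep_zero (c i)]
    ring
  · obtain ⟨m, hm⟩ : ∃ m, (j:ℕ) = m + 1 := ⟨(j:ℕ) - 1, by omega⟩
    have hsum2 : (∑ l : Fin (s+1), (P (l:ℕ)).eval (c i) *
        (if (l:ℕ)+1 = (j:ℕ) then -xi (j:ℕ) else 0))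
        = (P m).eval (c i) * (-xi (j:ℕ)) := by
      rw [Finset.sum_eq_single (⟨m, by omega⟩ : Fin (s+1))]
      · simp [hm]
      · intro b _ hb
        rw [if_neg, mul_zero]
        intro hc
        exact hb (Fin.ext (show (b:ℕ) = m by omega))
      · intro h; exact absurd (Finset.mem_univ _) h
    rw [hsum2, if_neg (by omega)]
    simp only [hPE]
    rw [hm, integral_Ep_succ m (c i)]
    rw [show m + 1 + 1 = m + 2 from rfl]
    ring
end
end

section
/- For every s with 1 ≤ s ≤ k, 𝒫_s^T Ω 𝒫_{s+1} X̂_s X_s = X_s². -/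
open scoped Matrix

noncomputable section

open Polynomial

/-- Any polynomial of degree < n is a linear combination of P 0, ..., P (n-1). -/
private lemma span_P (P : ℕ → Polynomial ℝ) (hdeg : ∀ j, (P j).degree = (j : ℕ))
    (hlc : ∀ j, (P j).leadingCoeff ≠ 0) :
    ∀ (n : ℕ) (f : Polynomial ℝ), f.degree < (n : ℕ) →
      ∃ a : ℕ → ℝ, f = ∑ j ∈ Finset.range n, Polynomial.C (a j) * P j := by
  intro n
  induction n with
  | zero =>
    intro f hf
    refine ⟨fun _ => 0, ?_⟩
    have hf0 : f = 0 := by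
      by_contra h
      rw [f.degree_eq_natDegree h] at hf
      exact absurd hf (by exact_mod_cast Nat.not_lt_zero _)
    simp [hf0]
  | succ n ih =>
    intro f hf
    by_cases h : f.degree < (n : ℕ)
    · obtain ⟨a, ha⟩ := ih f h
      refine ⟨fun j => if j = n then 0 else a j, ?_⟩
      rw [Finset.sum_range_succ]
      beta_reduce
      rw [if_pos rfl, ha]
      have h1 : ∑ x ∈ Finset.range n, Polynomial.C (if x = n then (0:ℝ) else a x) * P x
          = ∑ j ∈ Finset.range n, Polynomial.C (a j) * P j :=
        Finset.sum_congr rfl fun j hj => by rw [if_neg (Finset.mem_range.1 hj).ne]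
      rw [h1]; simp
    · have hf0 : f ≠ 0 := by
        intro h0; apply h; rw [h0, degree_zero]; exact WithBot.bot_lt_coe n
      have hnd : f.natDegree = n := by
        have h1 : f.natDegree < n + 1 := by
          have := (degree_eq_natDegree hf0) ▸ hf
          exact_mod_cast this
        have h2 : ¬ f.natDegree < n := fun hlt => h (by
          rw [degree_eq_natDegree hf0]; exact_mod_cast hlt)
        omega
      set cc : ℝ := f.leadingCoeff * ((P n).leadingCoeff)⁻¹ with hcc
      have hccne : cc ≠ 0 := mul_ne_zero (leadingCoeff_ne_zero.2 hf0) (inv_ne_zero (hlc n))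
      have hdeg2 : (Polynomial.C cc * P n).degree = f.degree := by
        rw [degree_C_mul hccne, hdeg n, degree_eq_natDegree hf0, hnd]
      have hlc2 : (Polynomial.C cc * P n).leadingCoeff = f.leadingCoeff := by
        rw [leadingCoeff_mul, leadingCoeff_C, hcc, mul_assoc, inv_mul_cancel₀ (hlc n), mul_one]
      have hsub : (f - Polynomial.C cc * P n).degree < (n : ℕ) := by
        have := degree_sub_lt hdeg2.symm hf0 hlc2.symm
        rwa [degree_eq_natDegree hf0, hnd] at this
      obtain ⟨a, ha⟩ := ih _ hsub
      refine ⟨fun j => if j = n then cc else a j, ?_⟩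
      rw [Finset.sum_range_succ]
      beta_reduce
      rw [if_pos rfl]
      have h1 : ∑ x ∈ Finset.range n, Polynomial.C (if x = n then cc else a x) * P x
          = ∑ j ∈ Finset.range n, Polynomial.C (a j) * P j :=
        Finset.sum_congr rfl fun j hj => by rw [if_neg (Finset.mem_range.1 hj).ne]
      rw [h1, ← ha]; ring

private lemma P_orth (P : ℕ → Polynomial ℝ) (hdeg : ∀ j, (P j).degree = (j : ℕ))
    (hlc : ∀ j, (P j).leadingCoeff ≠ 0)
    (horm : ∀ i j, (∫ x in (0:ℝ)..1, (P i).eval x * (P j).eval x) = if i = j then 1 else 0)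
    (k : ℕ) (f : Polynomial ℝ) (hf : f.degree < (k : ℕ)) :
    (∫ x in (0:ℝ)..1, f.eval x * (P k).eval x) = 0 := by
  obtain ⟨a, ha⟩ := span_P P hdeg hlc k f hf
  have hev : ∀ x : ℝ, f.eval x * (P k).eval x
      = ∑ j ∈ Finset.range k, a j * ((P j).eval x * (P k).eval x) := by
    intro x
    rw [ha, eval_finset_sum, Finset.sum_mul]
    exact Finset.sum_congr rfl fun j _ => by simp [mul_assoc]
  simp_rw [hev]
  rw [intervalIntegral.integral_finset_sum (fun j _ =>
    ((show Continuous fun x => a j * ((P j).eval x * (P k).eval x) from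
      continuous_const.mul ((P j).continuous.mul (P k).continuous)).intervalIntegrable _ _))]
  refine Finset.sum_eq_zero fun j hj => ?_
  rw [intervalIntegral.integral_const_mul, horm j k,
    if_neg (Finset.mem_range.1 hj).ne, mul_zero]

private lemma quadExact (P : ℕ → Polynomial ℝ) (hdeg : ∀ j, (P j).degree = (j : ℕ))
    (hlc : ∀ j, (P j).leadingCoeff ≠ 0)
    (horm : ∀ i j, (∫ x in (0:ℝ)..1, (P i).eval x * (P j).eval x) = if i = j then 1 else 0)
    (k : ℕ) (hk : 1 ≤ k) (c : Fin k → ℝ) (hcinj : Function.Injective c)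
    (hroot : ∀ i, (P k).IsRoot (c i)) (b : Fin k → ℝ)
    (hb : ∀ i, b i = ∫ x in (0:ℝ)..1, ∏ j ∈ Finset.univ.erase i, (x - c j) / (c i - c j))
    (f : Polynomial ℝ) (hf : f.degree < ((2 * k : ℕ) : WithBot ℕ)) :
    ∑ i, b i * f.eval (c i) = ∫ x in (0:ℝ)..1, f.eval x := by
  have hPk0 : P k ≠ 0 := fun h => (hlc k) (by rw [h, leadingCoeff_zero])
  set L : ℝ := (P k).leadingCoeff with hL
  have hL0 : L ≠ 0 := hlc k
  set m : Polynomial ℝ := P k * Polynomial.C L⁻¹ with hm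
  have hmon : m.Monic := monic_mul_leadingCoeff_inv hPk0
  have hdm : m.degree = (k : ℕ) := by
    rw [hm, degree_mul_leadingCoeff_inv _ hPk0, hdeg k]
  set r : Polynomial ℝ := f %ₘ m with hr
  set q : Polynomial ℝ := f /ₘ m with hq
  have hkey : r + m * q = f := modByMonic_add_div f m
  have hrd : r.degree < (k : ℕ) := hdm ▸ degree_modByMonic_lt f hmon
  have hqd : q.degree < (k : ℕ) := by
    rcases eq_or_ne q 0 with h0 | h0
    · rw [h0, degree_zero]
      exact_mod_cast WithBot.bot_lt_coe k
    · have hf0 : f ≠ 0 := by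
        intro h; rw [hq, h, zero_divByMonic] at h0; exact h0 rfl
      have hmk : m.natDegree = k := natDegree_eq_of_degree_eq_some hdm
      have hnd : q.natDegree = f.natDegree - k := by
        rw [hq, natDegree_divByMonic f hmon, hmk]
      have hfd : f.natDegree < 2 * k := by
        have := (degree_eq_natDegree hf0) ▸ hf
        exact_mod_cast this
      rw [degree_eq_natDegree h0]
      exact_mod_cast (by omega : q.natDegree < k)
  -- the roots kill m
  have hmz : ∀ i, m.eval (c i) = 0 := fun i => by
    rw [hm, eval_mul, hroot i, zero_mul]
  have hfr : ∀ i, f.eval (c i) = r.eval (c i) := fun i => by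
    conv_lhs => rw [← hkey]
    rw [eval_add, eval_mul, hmz i, zero_mul, add_zero]
  -- the integral of f equals the integral of r
  have hint : (∫ x in (0:ℝ)..1, f.eval x) = ∫ x in (0:ℝ)..1, r.eval x := by
    conv_lhs => rw [← hkey]
    have hmq : ∀ x : ℝ, (r + m * q).eval x
        = r.eval x + L⁻¹ * (q.eval x * (P k).eval x) := by
      intro x; rw [eval_add, eval_mul, hm, eval_mul, eval_C]; ring
    simp_rw [hmq]
    rw [intervalIntegral.integral_add (r.continuous.intervalIntegrable _ _)
      ((show Continuous fun x => L⁻¹ * (q.eval x * (P k).eval x) from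
        continuous_const.mul (q.continuous.mul (P k).continuous)).intervalIntegrable _ _),
      intervalIntegral.integral_const_mul, P_orth P hdeg hlc horm k q hqd, mul_zero, add_zero]
  -- Lagrange interpolation of r is exact
  classical
  have hcard : (Finset.univ : Finset (Fin k)).card = k := by simp
  have hrL : r = Lagrange.interpolate Finset.univ c (fun i => r.eval (c i)) := by
    have := Lagrange.eq_interpolate (f := r) (hcinj.injOn) (by rw [hcard]; exact hrd)
    exact this
  -- integral of each Lagrange basis polynomial is b i
  have hbasis : ∀ i, (∫ x in (0:ℝ)..1, (Lagrange.basis Finset.univ c i).eval x) = b i := by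
    intro i
    rw [hb i]
    congr 1; funext x
    rw [Lagrange.basis, eval_prod]
    refine Finset.prod_congr rfl fun j _ => ?_
    rw [Lagrange.basisDivisor]
    simp [div_eq_inv_mul]
  calc ∑ i, b i * f.eval (c i) = ∑ i, r.eval (c i) * b i := by
        refine Finset.sum_congr rfl fun i _ => ?_
        rw [hfr i]; ring
    _ = ∑ i, ∫ x in (0:ℝ)..1, r.eval (c i) * (Lagrange.basis Finset.univ c i).eval x := by
        refine Finset.sum_congr rfl fun i _ => ?_
        rw [intervalIntegral.integral_const_mul, hbasis i]
    _ = ∫ x in (0:ℝ)..1, ∑ i, r.eval (c i) * (Lagrange.basis Finset.univ c i).eval x := by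
        rw [intervalIntegral.integral_finset_sum (fun i _ =>
          (show Continuous fun x => r.eval (c i) * (Lagrange.basis Finset.univ c i).eval x from
            continuous_const.mul (Lagrange.basis Finset.univ c i).continuous).intervalIntegrable _ _)]
    _ = ∫ x in (0:ℝ)..1, r.eval x := by
        congr 1; funext x
        conv_rhs => rw [hrL]
        rw [Lagrange.interpolate_apply, eval_finset_sum]
        exact Finset.sum_congr rfl fun i _ => by rw [eval_mul, eval_C]
    _ = ∫ x in (0:ℝ)..1, f.eval x := hint.symm

/-- For every `s` with `1 ≤ s ≤ k`, `𝒫_sᵀ Ω 𝒫_{s+1} X̂_s X_s = X_s²`. -/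
theorem PmatT_Omega_Pmat_Xhat_Xmat (P : ℕ → Polynomial ℝ) (hP : IsShiftedLegendre P)
    (k : ℕ) (hk : 1 ≤ k) (c : Fin k → ℝ) (hc : StrictMono c)
    (hmem : ∀ i, c i ∈ Set.Ioo (0 : ℝ) 1) (hroot : ∀ i, (P k).IsRoot (c i))
    (hall : ∀ x : ℝ, (P k).IsRoot x → ∃ i, c i = x)
    (b : Fin k → ℝ)
    (hb : ∀ i, b i = ∫ x in (0:ℝ)..1, ∏ j ∈ Finset.univ.erase i, (x - c j) / (c i - c j))
    (s : ℕ) (hs : 1 ≤ s) (hsk : s ≤ k) :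
    (Pmat P c s)ᵀ * Matrix.diagonal b * Pmat P c (s + 1) * Xhat s * Xmat s =
      Xmat s * Xmat s := by
  obtain ⟨hdeg, hpos, horm⟩ := hP
  have hlc : ∀ j, (P j).leadingCoeff ≠ 0 := fun j => (hpos j).ne'

  have hE : (Pmat P c s)ᵀ * Matrix.diagonal b * Pmat P c (s + 1)
      = Matrix.of (fun (i : Fin s) (j : Fin (s + 1)) =>
          if (i : ℕ) = (j : ℕ) then 1 else 0) := by
    ext i j
    rw [Matrix.mul_apply]
    simp only [Matrix.mul_diagonal, Matrix.transpose_apply, Pmat, Matrix.of_apply]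
    have hdf : ((P (i : ℕ)) * (P (j : ℕ))).degree < ((2 * k : ℕ) : WithBot ℕ) := by
      rw [degree_mul, hdeg, hdeg, ← Nat.cast_add]
      exact_mod_cast (by omega : (i : ℕ) + (j : ℕ) < 2 * k)
    have hq := quadExact P hdeg hlc horm k hk c hc.injective hroot b hb _ hdf
    have hsum : ∑ l, (P (i : ℕ)).eval (c l) * b l * (P (j : ℕ)).eval (c l)
        = ∑ l, b l * ((P (i : ℕ)) * (P (j : ℕ))).eval (c l) :=
      Finset.sum_congr rfl fun l _ => by rw [eval_mul]; ring
    rw [hsum, hq]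
    have : (∫ x in (0:ℝ)..1, ((P (i : ℕ)) * (P (j : ℕ))).eval x)
        = if (i : ℕ) = (j : ℕ) then 1 else 0 := by
      simp_rw [eval_mul]
      exact horm _ _
    rw [this]
  have hEX : (Matrix.of (fun (i : Fin s) (j : Fin (s + 1)) =>
      if (i : ℕ) = (j : ℕ) then (1:ℝ) else 0)) * Xhat s = Xmat s := by
    ext i j
    rw [Matrix.mul_apply]
    rw [Finset.sum_eq_single (Fin.castSucc i)]
    · simp only [Matrix.of_apply, Fin.coe_castSucc, if_pos rfl, one_mul, Xhat]
      rw [dif_pos i.isLt]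
      simp
    · intro l _ hl
      have : (i : ℕ) ≠ (l : ℕ) := by
        intro h; exact hl (Fin.ext h.symm)
      simp [Matrix.of_apply, this]
    · intro h; exact absurd (Finset.mem_univ _) h
  rw [hE, hEX]
end
end

section
/- Let 1 ≤ s ≤ k and let H ∈ ℝ^{m×m} be any matrix. Then (𝒫_s^T Ω ⊗ I_m) (I_k ⊗ H) (𝒫_{s+1} X̂_s X_s ⊗ I_m) = X_s² ⊗ H. Consequently, if ∇²U(q₀) = H, the Jacobian of the simplified Newton iteration for F is I_{sm} + h² X_s² ⊗ ∇²U(q₀). -/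
open scoped Matrix Kronecker

noncomputable section

open Polynomial in
private lemma legendre_orth_aux (P : ℕ → Polynomial ℝ) (hP : IsShiftedLegendre P) (k : ℕ) :
    ∀ q : Polynomial ℝ, q.degree < (k : ℕ) →
      (∫ x in (0:ℝ)..1, q.eval x * (P k).eval x) = 0 := by
  suffices H : ∀ n : ℕ, ∀ q : Polynomial ℝ, q.natDegree < n → q.degree < (k : ℕ) →
      (∫ x in (0:ℝ)..1, q.eval x * (P k).eval x) = 0 by
    exact fun q hq => H (q.natDegree + 1) q (Nat.lt_succ_self _) hq
  intro n
  induction n with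
  | zero => intro q h; omega
  | succ n ih =>
    intro q hdn hdk
    by_cases hq0 : q = 0
    · simp [hq0]
    set d := q.natDegree with hd
    have hPdlc : (P d).leadingCoeff ≠ 0 := ne_of_gt (hP.2.1 d)
    have hPd0 : P d ≠ 0 := leadingCoeff_ne_zero.mp hPdlc
    set a := q.leadingCoeff / (P d).leadingCoeff with ha
    have ha0 : a ≠ 0 := div_ne_zero (leadingCoeff_ne_zero.mpr hq0) hPdlc
    have hdegPd : (P d).degree = (d : ℕ) := hP.1 d
    have hdegq : q.degree = (d : ℕ) := degree_eq_natDegree hq0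
    have hdegs : q.degree = (C a * P d).degree := by
      rw [degree_C_mul ha0, hdegPd, hdegq]
    have hlc : q.leadingCoeff = (C a * P d).leadingCoeff := by
      rw [leadingCoeff_mul, leadingCoeff_C, ha, div_mul_cancel₀ _ hPdlc]
    have hlt : (q - C a * P d).degree < q.degree := degree_sub_lt hdegs hq0 hlc
    have int1 : IntervalIntegrable (fun x => (q - C a * P d).eval x * (P k).eval x)
        MeasureTheory.volume 0 1 :=
      ((Polynomial.continuous _).mul (Polynomial.continuous _)).intervalIntegrable 0 1
    have int2 : IntervalIntegrable (fun x => a * ((P d).eval x * (P k).eval x))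
        MeasureTheory.volume 0 1 :=
      (continuous_const.mul ((Polynomial.continuous _).mul
        (Polynomial.continuous _))).intervalIntegrable 0 1
    have hsplit : (∫ x in (0:ℝ)..1, q.eval x * (P k).eval x)
        = (∫ x in (0:ℝ)..1, (q - C a * P d).eval x * (P k).eval x)
          + a * ∫ x in (0:ℝ)..1, (P d).eval x * (P k).eval x := by
      rw [← intervalIntegral.integral_const_mul, ← intervalIntegral.integral_add int1 int2]
      refine intervalIntegral.integral_congr fun x _ => ?_
      simp only [eval_sub, eval_mul, eval_C]
      ring
    have hdk' : d ≠ k := by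
      have : (d : WithBot ℕ) < (k : ℕ) := hdegq ▸ hdk
      exact_mod_cast ne_of_lt this
    have hPdPk : (∫ x in (0:ℝ)..1, (P d).eval x * (P k).eval x) = 0 := by
      rw [hP.2.2 d k, if_neg hdk']
    rw [hsplit, hPdPk, mul_zero, add_zero]
    by_cases hq'0 : q - C a * P d = 0
    · simp [hq'0]
    · refine ih _ ?_ (lt_trans hlt hdk)
      have h1 : (q - C a * P d).natDegree < q.natDegree :=
        natDegree_lt_natDegree hq'0 hlt
      omega

open Polynomial in
private lemma legendre_quad_exact_low (k : ℕ) (c : Fin k → ℝ) (hcinj : Function.Injective c)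
    (b : Fin k → ℝ)
    (hb : ∀ i, b i = ∫ x in (0:ℝ)..1,
      ∏ j ∈ Finset.univ.erase i, (x - c j) / (c i - c j))
    (r : Polynomial ℝ) (hr : r.degree < (k : ℕ)) :
    ∑ l, b l * r.eval (c l) = ∫ x in (0:ℝ)..1, r.eval x := by
  have hinj : Set.InjOn c (Finset.univ : Finset (Fin k)) := fun x _ y _ h => hcinj h
  have hcard : r.degree < (Finset.univ : Finset (Fin k)).card := by
    simpa using hr
  have hb' : ∀ i, b i = ∫ x in (0:ℝ)..1, (Lagrange.basis Finset.univ c i).eval x := by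
    intro i
    rw [hb i]
    refine intervalIntegral.integral_congr fun x _ => ?_
    rw [Lagrange.basis, Polynomial.eval_prod]
    refine Finset.prod_congr rfl fun j _ => ?_
    simp [Lagrange.basisDivisor, div_eq_inv_mul]
  have hrep := Lagrange.eq_interpolate hinj hcard
  calc ∑ l, b l * r.eval (c l)
      = ∑ l, r.eval (c l) * ∫ x in (0:ℝ)..1, (Lagrange.basis Finset.univ c l).eval x := by
        refine Finset.sum_congr rfl fun l _ => ?_
        rw [← hb' l]; ring
    _ = ∑ l, ∫ x in (0:ℝ)..1, r.eval (c l) * (Lagrange.basis Finset.univ c l).eval x := by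
        simp_rw [intervalIntegral.integral_const_mul]
    _ = ∫ x in (0:ℝ)..1, ∑ l, r.eval (c l) * (Lagrange.basis Finset.univ c l).eval x := by
        rw [intervalIntegral.integral_finset_sum]
        intro i _
        exact (continuous_const.mul (Polynomial.continuous _)).intervalIntegrable 0 1
    _ = ∫ x in (0:ℝ)..1, r.eval x := by
        refine intervalIntegral.integral_congr fun x _ => ?_
        conv_rhs => rw [hrep]
        simp [Lagrange.interpolate_apply, Polynomial.eval_finset_sum]

open Polynomial in
private lemma legendre_quad_PiPj (P : ℕ → Polynomial ℝ) (hP : IsShiftedLegendre P)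
    (k : ℕ) (c : Fin k → ℝ) (hcinj : Function.Injective c)
    (hroot : ∀ i, (P k).IsRoot (c i))
    (b : Fin k → ℝ)
    (hb : ∀ i, b i = ∫ x in (0:ℝ)..1,
      ∏ j ∈ Finset.univ.erase i, (x - c j) / (c i - c j))
    (i j : ℕ) (hi : i < k) (hj : j < k) :
    ∑ l, b l * ((P i).eval (c l) * (P j).eval (c l)) = if i = j then 1 else 0 := by
  set p := P i * P j with hp
  have hPk0 : P k ≠ 0 := leadingCoeff_ne_zero.mp (ne_of_gt (hP.2.1 k))
  set M := P k * C (P k).leadingCoeff⁻¹ with hM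
  have hMmonic : M.Monic := monic_mul_leadingCoeff_inv hPk0
  have hMdeg : M.degree = (k : ℕ) := by
    rw [hM, degree_mul_leadingCoeff_inv _ hPk0, hP.1]
  have hMnat : M.natDegree = k := natDegree_eq_of_degree_eq_some hMdeg
  have hMroot : ∀ l, M.eval (c l) = 0 := by
    intro l
    rw [hM, eval_mul, hroot l, zero_mul]
  set q := p /ₘ M with hq
  set r := p %ₘ M with hr
  have hpqr : r + M * q = p := modByMonic_add_div p M
  have hrdeg : r.degree < (k : ℕ) := hMdeg ▸ degree_modByMonic_lt p hMmonic
  have hqnat : q.natDegree < k := by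
    have h1 : q.natDegree = p.natDegree - M.natDegree := natDegree_divByMonic p hMmonic
    have h2 : p.natDegree ≤ i + j := by
      refine le_trans (natDegree_mul_le) ?_
      have : (P i).natDegree = i := natDegree_eq_of_degree_eq_some (hP.1 i)
      have : (P j).natDegree = j := natDegree_eq_of_degree_eq_some (hP.1 j)
      omega
    omega
  have hqdeg : (C (P k).leadingCoeff⁻¹ * q).degree < (k : ℕ) := by
    rw [degree_C_mul (inv_ne_zero (ne_of_gt (hP.2.1 k)))]
    refine lt_of_le_of_lt degree_le_natDegree ?_
    exact_mod_cast hqnat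
  have hMq : (∫ x in (0:ℝ)..1, (M * q).eval x) = 0 := by
    have : (∫ x in (0:ℝ)..1, (M * q).eval x)
        = ∫ x in (0:ℝ)..1, (C (P k).leadingCoeff⁻¹ * q).eval x * (P k).eval x := by
      refine intervalIntegral.integral_congr fun x _ => ?_
      simp only [hM, eval_mul, eval_C]
      ring
    rw [this]
    exact legendre_orth_aux P hP k _ hqdeg
  have hsum : ∑ l, b l * ((P i).eval (c l) * (P j).eval (c l))
      = ∑ l, b l * r.eval (c l) := by
    refine Finset.sum_congr rfl fun l _ => ?_
    have : p.eval (c l) = r.eval (c l) := by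
      conv_lhs => rw [← hpqr]
      rw [eval_add, eval_mul, hMroot l, zero_mul, add_zero]
    rw [← this, hp, eval_mul]
  rw [hsum, legendre_quad_exact_low k c hcinj b hb r hrdeg]
  have hintr : (∫ x in (0:ℝ)..1, r.eval x)
      = (∫ x in (0:ℝ)..1, p.eval x) - ∫ x in (0:ℝ)..1, (M * q).eval x := by
    have intp : IntervalIntegrable (fun x => (M * q).eval x) MeasureTheory.volume 0 1 :=
      (Polynomial.continuous _).intervalIntegrable 0 1
    have intr : IntervalIntegrable (fun x => r.eval x) MeasureTheory.volume 0 1 :=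
      (Polynomial.continuous _).intervalIntegrable 0 1
    rw [eq_sub_iff_add_eq, ← intervalIntegral.integral_add intr intp]
    refine intervalIntegral.integral_congr fun x _ => ?_
    conv_rhs => rw [← hpqr]
    simp [eval_add]
  rw [hintr, hMq, sub_zero]
  have := hP.2.2 i j
  rw [hp]
  simpa [eval_mul] using this

private lemma E_mul_Xhat (s : ℕ) :
    (Matrix.of fun (i : Fin s) (j : Fin (s+1)) => if (i:ℕ) = (j:ℕ) then (1:ℝ) else 0)
      * Xhat s = Xmat s := by
  ext i j
  rw [Matrix.mul_apply, Finset.sum_eq_single (Fin.castSucc i)]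
  · simp [Xhat, i.isLt]
  · intro l _ hl
    rw [Matrix.of_apply, if_neg, zero_mul]
    intro h
    exact hl (by ext; simpa using h.symm)
  · simp

/-- For `1 ≤ s ≤ k` and any `H ∈ ℝ^{m×m}`,
`(𝒫_sᵀ Ω ⊗ I_m)(I_k ⊗ H)(𝒫_{s+1} X̂_s X_s ⊗ I_m) = X_s² ⊗ H`; consequently the
Jacobian of the simplified Newton iteration, `I_{sm} + h² (𝒫_sᵀ Ω ⊗ I_m)(I_k ⊗ H)
(𝒫_{s+1} X̂_s X_s ⊗ I_m)`, equals `I_{sm} + h² X_s² ⊗ H`. -/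
theorem kronecker_newton_jacobian (P : ℕ → Polynomial ℝ) (hP : IsShiftedLegendre P)
    (k : ℕ) (hk : 1 ≤ k) (c : Fin k → ℝ) (hc : StrictMono c)
    (hmem : ∀ i, c i ∈ Set.Ioo (0 : ℝ) 1) (hroot : ∀ i, (P k).IsRoot (c i))
    (hall : ∀ x : ℝ, (P k).IsRoot x → ∃ i, c i = x)
    (b : Fin k → ℝ)
    (hb : ∀ i, b i = ∫ x in (0:ℝ)..1, ∏ j ∈ Finset.univ.erase i, (x - c j) / (c i - c j))
    (s : ℕ) (hs : 1 ≤ s) (hsk : s ≤ k)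
    (m : ℕ) (H : Matrix (Fin m) (Fin m) ℝ) :
    (((Pmat P c s)ᵀ * Matrix.diagonal b) ⊗ₖ (1 : Matrix (Fin m) (Fin m) ℝ)) *
        ((1 : Matrix (Fin k) (Fin k) ℝ) ⊗ₖ H) *
        ((Pmat P c (s + 1) * Xhat s * Xmat s) ⊗ₖ (1 : Matrix (Fin m) (Fin m) ℝ)) =
      (Xmat s * Xmat s) ⊗ₖ H ∧
    ∀ h : ℝ,
      (1 : Matrix (Fin s × Fin m) (Fin s × Fin m) ℝ) +
        h ^ 2 • ((((Pmat P c s)ᵀ * Matrix.diagonal b) ⊗ₖ (1 : Matrix (Fin m) (Fin m) ℝ)) *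
          ((1 : Matrix (Fin k) (Fin k) ℝ) ⊗ₖ H) *
          ((Pmat P c (s + 1) * Xhat s * Xmat s) ⊗ₖ (1 : Matrix (Fin m) (Fin m) ℝ))) =
      1 + h ^ 2 • ((Xmat s * Xmat s) ⊗ₖ H) := by
  
  have hcinj : Function.Injective c := hc.injective
  have hE : (Pmat P c s)ᵀ * Matrix.diagonal b * Pmat P c (s + 1)
      = Matrix.of fun (i : Fin s) (j : Fin (s+1)) => if (i:ℕ) = (j:ℕ) then (1:ℝ) else 0 := by
    ext i j
    rw [Matrix.mul_assoc, Matrix.mul_apply]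
    have hsum : ∀ l : Fin k, ((Pmat P c s)ᵀ i l) * ((Matrix.diagonal b * Pmat P c (s+1)) l j)
        = b l * (((P (i:ℕ)).eval (c l)) * ((P (j:ℕ)).eval (c l))) := by
      intro l
      rw [Matrix.diagonal_mul]
      simp only [Matrix.transpose_apply, Pmat, Matrix.of_apply]
      ring
    rw [Finset.sum_congr rfl (fun l _ => hsum l)]
    have hi : (i : ℕ) < k := lt_of_lt_of_le i.isLt hsk
    by_cases hjk : (j : ℕ) < k
    · rw [legendre_quad_PiPj P hP k c hcinj hroot b hb _ _ hi hjk]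
      rfl
    · have hjek : (j : ℕ) = k := by omega
      have hz : ∀ l : Fin k, b l * (((P (i:ℕ)).eval (c l)) * ((P (j:ℕ)).eval (c l))) = 0 := by
        intro l
        rw [hjek]
        have := hroot l
        rw [Polynomial.IsRoot] at this
        rw [this, mul_zero, mul_zero]
      rw [Finset.sum_congr rfl (fun l _ => hz l), Finset.sum_const_zero, Matrix.of_apply,
        if_neg (by omega)]
  have hmain : (((Pmat P c s)ᵀ * Matrix.diagonal b) ⊗ₖ (1 : Matrix (Fin m) (Fin m) ℝ)) *
        ((1 : Matrix (Fin k) (Fin k) ℝ) ⊗ₖ H) *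
        ((Pmat P c (s + 1) * Xhat s * Xmat s) ⊗ₖ (1 : Matrix (Fin m) (Fin m) ℝ)) =
      (Xmat s * Xmat s) ⊗ₖ H := by
    rw [← Matrix.mul_kronecker_mul, ← Matrix.mul_kronecker_mul, Matrix.mul_one, Matrix.one_mul,
      Matrix.mul_one]
    rw [show ((Pmat P c s)ᵀ * Matrix.diagonal b) * (Pmat P c (s + 1) * Xhat s * Xmat s)
        = (((Pmat P c s)ᵀ * Matrix.diagonal b * Pmat P c (s + 1)) * Xhat s) * Xmat s by
      simp only [Matrix.mul_assoc]]
    rw [hE, E_mul_Xhat]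
  exact ⟨hmain, fun h => by rw [hmain]⟩
end
end
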